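/- Let t ↦ ν(t) be a weak solution of the isotropic 3-wave kinetic equation for acoustic waves with initial datum ν₀ satisfying ν₀({0}) = 0. Then ν(t)({0}) = 0 for all t ∈ [0,∞); that is, no energy ever concentrates at the origin. -/

import Mathlib

open MeasureTheory Filter Topology
open scoped ENNReal NNReal

noncomputable section

/-- The functional `H¹_φ(p₁,p₂)`. -/
def H1 (φ : ℝ → ℝ) (p₁ p₂ : ℝ) : ℝ :=
  (p₁ + p₂) ^ 3 * φ (p₁ + p₂) - 2 * (p₁ ^ 3 + p₁ * p₂ ^ 2) * φ p₁
    - 4 * p₁ * p₂ ^ 2 * φ p₂ + (p₁ - p₂) ^ 3 * φ (p₁ - p₂)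

/-- The functional `H²_φ(p₁,p₂)`. -/
def H2 (φ : ℝ → ℝ) (p₁ p₂ : ℝ) : ℝ :=
  (p₁ + p₂) ^ 2 * ((p₁ + p₂) * φ (p₁ + p₂) - p₁ * φ p₁ - p₂ * φ p₂)

/-- Restriction of a test function on the extended half line `[0,∞] = ℝ≥0∞`
to the finite part `[0,∞)`. -/
def restr (φ : ℝ≥0∞ → ℝ) : ℝ → ℝ := fun p => φ (ENNReal.ofReal p)

/-- `K` is the continuous extension to `[0,∞]²` of `H¹_φ(p₁,p₂)/(p₁p₂)`. -/
def IsH1Ext (φ : ℝ≥0∞ → ℝ) (K : ℝ≥0∞ → ℝ≥0∞ → ℝ) : Prop :=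
  Continuous (Function.uncurry K) ∧
    ∀ p₁ p₂ : ℝ, 0 < p₂ → p₂ < p₁ →
      K (ENNReal.ofReal p₁) (ENNReal.ofReal p₂) = H1 (restr φ) p₁ p₂ / (p₁ * p₂)

/-- `K` is the continuous extension to `[0,∞]` of the diagonal kernel `H²_φ(p,p)/p²`. -/
def IsH2Ext (φ : ℝ≥0∞ → ℝ) (K : ℝ≥0∞ → ℝ) : Prop :=
  Continuous K ∧ ∀ p : ℝ, 0 < p → K (ENNReal.ofReal p) = H2 (restr φ) p p / (p * p)

/-- The collision terms
`2 ∬_{p₁>p₂≥0} K₁ dμ dμ + ∬_{p₁=p₂≥0} K₂ dμ dμ`. -/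
def collInt (μ : Measure ℝ≥0∞) (K₁ : ℝ≥0∞ → ℝ≥0∞ → ℝ) (K₂ : ℝ≥0∞ → ℝ) : ℝ :=
  2 * ∫ p₁, (∫ p₂, (if p₂ < p₁ then K₁ p₁ p₂ else 0) ∂μ) ∂μ
    + ∫ p₁, (∫ p₂, (if p₁ = p₂ then K₂ p₁ else 0) ∂μ) ∂μ

/-- The weak formulation of the isotropic 3-wave kinetic equation for acoustic waves for
one (time dependent) test function `φ` with time derivative `Dφ`: for every `t ≥ 0` and
every pair of continuous extensions `K₁ s, K₂ s` of the kernels `H¹_{φ(s,·)}/(p₁p₂)`,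
`H²_{φ(s,·)}/(p₁p₂)` on `[0,t]`,
`∫ φ(t,·) dν(t) - ∫ φ(0,·) dν(0) = ∫₀ᵗ (∫ ∂ₛφ dν(s) + collision terms) ds`. -/
def WeakIdentity (ν : ℝ → Measure ℝ≥0∞) (φ Dφ : ℝ → ℝ≥0∞ → ℝ) : Prop :=
  ∀ t : ℝ, 0 ≤ t →
    ∀ (K₁ : ℝ → ℝ≥0∞ → ℝ≥0∞ → ℝ) (K₂ : ℝ → ℝ≥0∞ → ℝ),
      (∀ s ∈ Set.Icc 0 t, IsH1Ext (φ s) (K₁ s)) →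
      (∀ s ∈ Set.Icc 0 t, IsH2Ext (φ s) (K₂ s)) →
      (∫ p, φ t p ∂(ν t)) - (∫ p, φ 0 p ∂(ν 0))
        = ∫ s in (0 : ℝ)..t, ((∫ p, Dφ s p ∂(ν s)) + collInt (ν s) (K₁ s) (K₂ s))

/-- A weak solution (in the sense of Definition 8 of the paper, case (i)) of the isotropic
3-wave kinetic equation for acoustic waves, written for the energy measure `ν(t)` on the
extended half line `[0,∞] = ℝ≥0∞`: `ν` is a weak-*-continuous family of finite nonnegative
measures with `ν(0) = ν₀` satisfying the weak formulation for all test functions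
`φ ∈ C¹([0,∞); C([0,∞]))`. -/
structure IsWeakSolution (ν : ℝ → Measure ℝ≥0∞) (ν₀ : Measure ℝ≥0∞) : Prop where
  finite : ∀ t : ℝ, IsFiniteMeasure (ν t)
  init : ν 0 = ν₀
  weakStarCont : ∀ ψ : C(ℝ≥0∞, ℝ), ContinuousOn (fun t => ∫ p, ψ p ∂(ν t)) (Set.Ici 0)
  eqn : ∀ φ Dφ : ℝ → C(ℝ≥0∞, ℝ),
    (∀ s : ℝ, HasDerivAt φ (Dφ s) s) → Continuous Dφ →
    WeakIdentity ν (fun s p => φ s p) (fun s p => Dφ s p)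

/-- A solution is nontrivial when the initial energy is not entirely concentrated
at `{∞}`. -/
def NontrivialSol (ν₀ : Measure ℝ≥0∞) : Prop := 0 < ν₀ (Set.Iio ⊤)

/-!
Test the weak formulation against `φ_ε(p) = e^{-p/ε}`, extended by `0` at `∞`; it equals `1` at
the origin. With `F(q) = q³ φ_ε(q)` the off-diagonal kernel reads
`H¹_{φ_ε}(p₁,p₂)/(p₁p₂) = (F(p₁+p₂) + F(p₁-p₂) - 2F(p₁))/(p₁p₂) - 2p₂φ_ε(p₁) - 4p₂φ_ε(p₂)`.
Since `F'' = O(ε)`, the second difference is `O(ε p₂²)` and this kernel is `≤ Cε` on `p₂ < p₁`,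
while the diagonal kernel `H²_{φ_ε}(p,p)/p² = 8p(φ_ε(2p) - φ_ε(p))` is `≤ 0`. Testing with
`φ = 1` shows that the total energy `m` is conserved, hence
`ν(t)({0}) ≤ ∫ φ_ε dν(t) ≤ ∫ φ_ε dν₀ + 2Cε m² t`, and the right-hand side tends to
`ν₀({0}) = 0` as `ε → 0` by dominated convergence.
-/

open Set
open scoped Nat

lemma ENNReal.tendsto_toReal_nhdsNE_top : Tendsto ENNReal.toReal (𝓝[≠] ∞) atTop := by
  refine tendsto_atTop.2 fun b => ?_
  filter_upwards [nhdsWithin_le_nhds (Ioi_mem_nhds (ENNReal.ofReal_lt_top (r := b))),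
    self_mem_nhdsWithin] with a hba hat
  exact (ENNReal.ofReal_le_iff_le_toReal hat).1 hba.le

lemma abs_div_mul_le {S C x y : ℝ} (hx : 0 ≤ x) (hy : 0 ≤ y) (hC : 0 ≤ C)
    (h : |S| ≤ C * (x * y)) : |S / (x * y)| ≤ C := by
  rw [abs_div, abs_of_nonneg (mul_nonneg hx hy)]
  exact div_le_of_le_mul₀ (mul_nonneg hx hy) hC h

def secondDiff (f : ℝ → ℝ) (x y : ℝ) : ℝ := f (x + y) + f (x - y) - 2 * f x

lemma abs_secondDiff_le {f f' f'' : ℝ → ℝ} {M x y : ℝ}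
    (hf : ∀ q, HasDerivAt f (f' q) q) (hf' : ∀ q, HasDerivAt f' (f'' q) q) (hy : 0 ≤ y)
    (hM : ∀ q ∈ Icc (x - y) (x + y), |f'' q| ≤ M) :
    |secondDiff f x y| ≤ 2 * M * y ^ 2 := by
  have hslope : ∀ t ∈ Icc 0 y, ‖f' (x + t) - f' (x - t)‖ ≤ 2 * M * y := by
    rintro t ⟨ht0, hty⟩
    have hM0 : 0 ≤ M := (abs_nonneg _).trans (hM x ⟨by linarith, by linarith⟩)
    have := (convex_Icc (x - y) (x + y)).norm_image_sub_le_of_norm_hasDerivWithin_le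
      (fun q _ => (hf' q).hasDerivWithinAt) hM (x := x - t) (y := x + t)
      ⟨by linarith, by linarith⟩ ⟨by linarith, by linarith⟩
    rw [Real.norm_eq_abs, Real.norm_eq_abs, abs_of_nonneg (by linarith : 0 ≤ x + t - (x - t))]
      at this
    rw [Real.norm_eq_abs]
    nlinarith
  have hderiv : ∀ t ∈ Icc 0 y, HasDerivWithinAt (secondDiff f x)
      (f' (x + t) - f' (x - t)) (Icc 0 y) t := fun t _ => by
    have hplus := (hf (x + t)).comp t ((hasDerivAt_id t).const_add x)
    have hminus := (hf (x - t)).comp t ((hasDerivAt_id t).const_sub x)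
    have := (hplus.add hminus).sub_const (2 * f x)
    simp only [mul_neg, mul_one, ← sub_eq_add_neg] at this
    exact this.hasDerivWithinAt
  have hzero : secondDiff f x 0 = 0 := by simp only [secondDiff, add_zero, sub_zero]; ring
  have := (convex_Icc 0 y).norm_image_sub_le_of_norm_hasDerivWithin_le hderiv hslope
    (left_mem_Icc.2 hy) (right_mem_Icc.2 hy)
  rwa [hzero, sub_zero, sub_zero, Real.norm_eq_abs, Real.norm_eq_abs, abs_of_nonneg hy,
    mul_assoc, ← sq] at this

section Integrals

variable {α : Type*} [MeasurableSpace α] {μ : Measure α} [IsFiniteMeasure μ]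

lemma integral_le_mul_measureReal_univ {f : α → ℝ} {C : ℝ} (hC : 0 ≤ C) (hf : ∀ᵐ x ∂μ, f x ≤ C) :
    ∫ x, f x ∂μ ≤ C * μ.real univ := by
  by_cases hfi : Integrable f μ
  · simpa [mul_comm] using integral_mono_ae hfi (integrable_const C) hf
  · rw [integral_undef hfi]; positivity

lemma intervalIntegral_le_mul {f : ℝ → ℝ} {C t : ℝ} (hC : 0 ≤ C) (ht : 0 ≤ t)
    (hf : ∀ s ∈ Icc 0 t, f s ≤ C) : ∫ s in 0..t, f s ≤ C * t := by
  have := integral_le_mul_measureReal_univ (μ := volume.restrict (Ioc 0 t)) hC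
    (ae_restrict_of_forall_mem measurableSet_Ioc fun s hs => hf s (Ioc_subset_Icc_self hs))
  rwa [measureReal_restrict_apply_univ, Real.volume_real_Ioc_of_le ht, sub_zero,
    ← intervalIntegral.integral_of_le ht] at this

lemma collInt_le {μ : Measure ℝ≥0∞} [IsFiniteMeasure μ] {K₁ : ℝ≥0∞ → ℝ≥0∞ → ℝ} {K₂ : ℝ≥0∞ → ℝ}
    {C : ℝ} (hC : 0 ≤ C) (hK₁ : ∀ a b, b < a → K₁ a b ≤ C) (hK₂ : ∀ a, K₂ a ≤ 0) :
    collInt μ K₁ K₂ ≤ 2 * C * μ.real univ ^ 2 := by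
  have hinner : ∀ p₁, ∫ p₂, (if p₂ < p₁ then K₁ p₁ p₂ else 0) ∂μ ≤ C * μ.real univ := fun p₁ =>
    integral_le_mul_measureReal_univ hC (ae_of_all _ fun p₂ => by
      split_ifs with h
      exacts [hK₁ p₁ p₂ h, hC])
  have hoff := integral_le_mul_measureReal_univ (μ := μ) (by positivity) (ae_of_all _ hinner)
  have hdiag : ∫ p₁, (∫ p₂, (if p₁ = p₂ then K₂ p₁ else 0) ∂μ) ∂μ ≤ 0 :=
    integral_nonpos fun p₁ => integral_nonpos fun p₂ => by
      dsimp only; split_ifs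
      exacts [hK₂ p₁, le_rfl]
  rw [collInt]
  nlinarith

end Integrals

namespace AcousticWave

def extendTop (h : ℝ → ℝ) (a : ℝ≥0∞) : ℝ := if a = ∞ then 0 else h a.toReal

def extendTop₂ (F : ℝ → ℝ → ℝ) (a b : ℝ≥0∞) : ℝ := if a = ∞ then 0 else F a.toReal b.toReal

variable {h : ℝ → ℝ} {F : ℝ → ℝ → ℝ}

lemma extendTop_ofReal {p : ℝ} (hp : 0 ≤ p) : extendTop h (ENNReal.ofReal p) = h p := by
  rw [extendTop, if_neg ENNReal.ofReal_ne_top, ENNReal.toReal_ofReal hp]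

lemma extendTop₂_ofReal {p q : ℝ} (hp : 0 ≤ p) (hq : 0 ≤ q) :
    extendTop₂ F (ENNReal.ofReal p) (ENNReal.ofReal q) = F p q := by
  rw [extendTop₂, if_neg ENNReal.ofReal_ne_top, ENNReal.toReal_ofReal hp,
    ENNReal.toReal_ofReal hq]

lemma tendsto_extendTop_top (hh : Tendsto h atTop (𝓝 0)) :
    Tendsto (extendTop h) (𝓝 ∞) (𝓝 0) := by
  rw [← nhdsNE_sup_pure ∞, tendsto_sup]
  refine ⟨(hh.comp ENNReal.tendsto_toReal_nhdsNE_top).congr' ?_, ?_⟩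
  · filter_upwards [self_mem_nhdsWithin] with a (ha : a ≠ ∞)
    simp [extendTop, ha]
  · simpa [extendTop] using tendsto_pure_nhds (extendTop h) ∞

lemma continuous_extendTop (hh : Continuous h) (hlim : Tendsto h atTop (𝓝 0)) :
    Continuous (extendTop h) := by
  refine continuous_iff_continuousAt.2 fun a => ?_
  rcases eq_or_ne a ∞ with rfl | ha
  · simpa [ContinuousAt, extendTop] using tendsto_extendTop_top hlim
  · rw [ContinuousAt, extendTop, if_neg ha]
    refine ((hh.tendsto _).comp (ENNReal.tendsto_toReal ha)).congr' ?_
    filter_upwards [Iio_mem_nhds ha.lt_top] with b (hb : b < ∞)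
    simp [extendTop, hb.ne]

lemma tendsto_extendTop₂_top {W : ℝ → ℝ} (hW : Tendsto W atTop (𝓝 0))
    (hFW : ∀ x y, 0 ≤ y → y ≤ x → |F x y| ≤ W x) (b : ℝ≥0∞) :
    Tendsto (Function.uncurry (extendTop₂ F)) (𝓝[{q | q.2 ≤ q.1}] (∞, b)) (𝓝 0) := by
  have hbound : ∀ q ∈ {q : ℝ≥0∞ × ℝ≥0∞ | q.2 ≤ q.1},
      ‖Function.uncurry (extendTop₂ F) q‖ ≤ extendTop W q.1 := by
    rintro ⟨a, b⟩ (hba : b ≤ a)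
    rcases eq_or_ne a ∞ with rfl | ha
    · simp [extendTop₂, extendTop]
    · simpa [extendTop₂, extendTop, ha] using
        hFW _ _ ENNReal.toReal_nonneg (ENNReal.toReal_mono ha hba)
  have hlim := (tendsto_extendTop_top hW).comp
    ((continuous_fst.tendsto (∞, b)).mono_left
      (nhdsWithin_le_nhds (s := {q : ℝ≥0∞ × ℝ≥0∞ | q.2 ≤ q.1})))
  exact squeeze_zero_norm' (eventually_nhdsWithin_of_forall hbound) hlim

lemma continuousWithinAt_extendTop₂
    (hF : ContinuousOn (Function.uncurry F) {p | 0 ≤ p.2 ∧ p.2 ≤ p.1}) {a b : ℝ≥0∞} (hba : b ≤ a) (ha : a ≠ ∞) :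
    ContinuousWithinAt (Function.uncurry (extendTop₂ F)) {q | q.2 ≤ q.1} (a, b) := by
  have hfin : ∀ᶠ q in 𝓝[{q | q.2 ≤ q.1}] (a, b), q.1 ≠ ∞ := by
    filter_upwards [nhdsWithin_le_nhds (continuousAt_fst.preimage_mem_nhds
      (Iio_mem_nhds ha.lt_top))] with q (hq : q.1 < ∞)
    exact hq.ne
  have hmaps : Tendsto (fun q : ℝ≥0∞ × ℝ≥0∞ => (q.1.toReal, q.2.toReal))
      (𝓝[{q | q.2 ≤ q.1}] (a, b)) (𝓝[{p | 0 ≤ p.2 ∧ p.2 ≤ p.1}] (a.toReal, b.toReal)) := by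
    refine tendsto_nhdsWithin_iff.2 ⟨?_, ?_⟩
    · exact (((ENNReal.continuousAt_toReal ha).comp (continuousAt_fst (p := (a, b)))).prodMk
        ((ENNReal.continuousAt_toReal (ne_top_of_le_ne_top ha hba)).comp
          (continuousAt_snd (p := (a, b))))).tendsto.mono_left nhdsWithin_le_nhds
    · filter_upwards [self_mem_nhdsWithin, hfin] with q (hq : q.2 ≤ q.1) hq1
      exact ⟨ENNReal.toReal_nonneg, ENNReal.toReal_mono hq1 hq⟩
  have hcont := (hF _ ⟨ENNReal.toReal_nonneg, ENNReal.toReal_mono ha hba⟩).tendsto.comp hmaps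
  rw [ContinuousWithinAt, Function.uncurry_apply_pair, extendTop₂, if_neg ha]
  refine hcont.congr' ?_
  filter_upwards [hfin] with q hq
  simp [Function.uncurry, extendTop₂, hq]

lemma continuousOn_extendTop₂ {W : ℝ → ℝ}
    (hF : ContinuousOn (Function.uncurry F) {p | 0 ≤ p.2 ∧ p.2 ≤ p.1})
    (hW : Tendsto W atTop (𝓝 0)) (hFW : ∀ x y, 0 ≤ y → y ≤ x → |F x y| ≤ W x) :
    ContinuousOn (Function.uncurry (extendTop₂ F)) {q | q.2 ≤ q.1} := by
  rintro ⟨a, b⟩ (hba : b ≤ a)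
  rcases eq_or_ne a ∞ with rfl | ha
  · simpa [ContinuousWithinAt, extendTop₂] using tendsto_extendTop₂_top hW hFW b
  · exact continuousWithinAt_extendTop₂ hF hba ha

def expDecay (ε x : ℝ) : ℝ := Real.exp (-(x / ε))

variable {ε : ℝ}

lemma expDecay_pos (x : ℝ) : 0 < expDecay ε x := Real.exp_pos _

lemma expDecay_zero : expDecay ε 0 = 1 := by simp [expDecay]

lemma expDecay_le_one (hε : 0 < ε) {x : ℝ} (hx : 0 ≤ x) : expDecay ε x ≤ 1 :=
  Real.exp_le_one_iff.2 (neg_nonpos.2 (div_nonneg hx hε.le))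

lemma expDecay_antitone (hε : 0 < ε) : Antitone (expDecay ε) := fun _ _ hxy =>
  Real.exp_le_exp.2 (neg_le_neg (div_le_div_of_nonneg_right hxy hε.le))

lemma expDecay_mul_self (x : ℝ) : expDecay (2 * ε) x * expDecay (2 * ε) x = expDecay ε x := by
  rw [expDecay, expDecay, ← Real.exp_add]; ring_nf

lemma expDecay_two_mul (x : ℝ) : expDecay ε (2 * x) = expDecay (ε / 2) x := by
  rw [expDecay, expDecay]; ring_nf

@[fun_prop] lemma continuous_expDecay : Continuous (expDecay ε) := by
  unfold expDecay; fun_prop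

lemma pow_mul_expDecay_le (hε : 0 < ε) (n : ℕ) {x : ℝ} (hx : 0 ≤ x) :
    x ^ n * expDecay ε x ≤ n ! * ε ^ n := by
  have h := Real.pow_div_factorial_le_exp (x := x / ε) (div_nonneg hx hε.le) n
  rw [div_pow, div_div, div_le_iff₀ (by positivity)] at h
  have hexp : Real.exp (x / ε) * expDecay ε x = 1 := by
    rw [expDecay, ← Real.exp_add, add_neg_cancel, Real.exp_zero]
  calc x ^ n * expDecay ε x ≤ Real.exp (x / ε) * (ε ^ n * n !) * expDecay ε x := by
        gcongr; exact (expDecay_pos x).le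
    _ = n ! * ε ^ n := by rw [mul_right_comm, hexp]; ring

lemma tendsto_pow_mul_expDecay (hε : 0 < ε) (n : ℕ) :
    Tendsto (fun x => x ^ n * expDecay ε x) atTop (𝓝 0) := by
  have := ((Real.tendsto_pow_mul_exp_neg_atTop_nhds_zero n).comp
    (tendsto_id.atTop_div_const hε)).const_mul (ε ^ n)
  rw [mul_zero] at this
  refine this.congr fun x => ?_
  simp only [Function.comp_apply, expDecay, div_pow, id]
  field_simp

lemma hasDerivAt_expDecay (x : ℝ) : HasDerivAt (expDecay ε) (-(expDecay ε x / ε)) x :=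
  (((hasDerivAt_id x).div_const ε).neg).exp.congr_deriv (by simp [expDecay]; ring)

def cubeExpDecay (ε q : ℝ) : ℝ := q ^ 3 * expDecay ε q

def cubeExpDecayDeriv (ε q : ℝ) : ℝ := (3 * q ^ 2 - q ^ 3 / ε) * expDecay ε q

def cubeExpDecayDeriv2 (ε q : ℝ) : ℝ := (6 * q - 6 * q ^ 2 / ε + q ^ 3 / ε ^ 2) * expDecay ε q

lemma hasDerivAt_cubeExpDecay (q : ℝ) :
    HasDerivAt (cubeExpDecay ε) (cubeExpDecayDeriv ε q) q :=
  ((hasDerivAt_pow 3 q).mul (hasDerivAt_expDecay q)).congr_deriv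
    (by simp only [cubeExpDecayDeriv]; ring)

lemma hasDerivAt_cubeExpDecayDeriv (hε : ε ≠ 0) (q : ℝ) :
    HasDerivAt (cubeExpDecayDeriv ε) (cubeExpDecayDeriv2 ε q) q := by
  have hpoly : HasDerivAt (fun q => 3 * q ^ 2 - q ^ 3 / ε) (6 * q - 3 * q ^ 2 / ε) q := by
    exact (((hasDerivAt_pow 2 q).const_mul 3).sub ((hasDerivAt_pow 3 q).div_const ε)).congr_deriv
      (by push_cast; ring)
  exact (hpoly.mul (hasDerivAt_expDecay q)).congr_deriv
    (by simp only [cubeExpDecayDeriv2]; field_simp; ring)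

lemma abs_cubeExpDecayDeriv2_le (hε : 0 < ε) {q : ℝ} (hq : 0 ≤ q) :
    |cubeExpDecayDeriv2 ε q| ≤ (6 * q + 6 * q ^ 2 / ε + q ^ 3 / ε ^ 2) * expDecay ε q := by
  rw [cubeExpDecayDeriv2, abs_mul, abs_of_pos (expDecay_pos q)]
  refine mul_le_mul_of_nonneg_right ?_ (expDecay_pos q).le
  have : 0 ≤ 6 * q ^ 2 / ε := by positivity
  have : 0 ≤ q ^ 3 / ε ^ 2 := by positivity
  rw [abs_le]
  constructor <;> linarith

lemma abs_cubeExpDecayDeriv2_le_expDecay (hε : 0 < ε) {q : ℝ} (hq : 0 ≤ q) :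
    |cubeExpDecayDeriv2 ε q| ≤ 108 * ε * expDecay (2 * ε) q := by
  have h2ε : 0 < 2 * ε := by positivity
  have h1 := pow_mul_expDecay_le h2ε 1 hq
  have h2 := pow_mul_expDecay_le h2ε 2 hq
  have h3 := pow_mul_expDecay_le h2ε 3 hq
  simp only [pow_one, Nat.factorial] at h1 h2 h3
  norm_num at h1 h2 h3
  have h2' : q ^ 2 * expDecay (2 * ε) q / ε ≤ 8 * ε := by rw [div_le_iff₀ hε]; nlinarith
  have h3' : q ^ 3 * expDecay (2 * ε) q / ε ^ 2 ≤ 48 * ε := by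
    rw [div_le_iff₀ (by positivity)]; nlinarith
  have henv : (6 * q + 6 * q ^ 2 / ε + q ^ 3 / ε ^ 2) * expDecay (2 * ε) q ≤ 108 * ε := by
    have : (6 * q + 6 * q ^ 2 / ε + q ^ 3 / ε ^ 2) * expDecay (2 * ε) q =
        6 * (q * expDecay (2 * ε) q) + 6 * (q ^ 2 * expDecay (2 * ε) q / ε)
          + q ^ 3 * expDecay (2 * ε) q / ε ^ 2 := by ring
    linarith
  calc |cubeExpDecayDeriv2 ε q|
      ≤ (6 * q + 6 * q ^ 2 / ε + q ^ 3 / ε ^ 2) * expDecay (2 * ε) q * expDecay (2 * ε) q := by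
        rw [mul_assoc, expDecay_mul_self]; exact abs_cubeExpDecayDeriv2_le hε hq
    _ ≤ 108 * ε * expDecay (2 * ε) q := by gcongr; exact (expDecay_pos q).le

lemma abs_cubeExpDecay_le (hε : 0 < ε) {q : ℝ} (hq : 0 ≤ q) : |cubeExpDecay ε q| ≤ 6 * ε ^ 3 := by
  rw [cubeExpDecay, abs_of_nonneg (by have := expDecay_pos (ε := ε) q; positivity)]
  simpa [Nat.factorial] using pow_mul_expDecay_le hε 3 hq

lemma abs_secondDiff_cubeExpDecay_le (hε : 0 < ε) {x y : ℝ} (hy : 0 ≤ y) (hyx : y ≤ x) :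
    |secondDiff (cubeExpDecay ε) x y| ≤ 24 * ε ^ 3 := by
  have h1 := abs_cubeExpDecay_le hε (q := x + y) (by linarith)
  have h2 := abs_cubeExpDecay_le hε (q := x - y) (by linarith)
  have h3 := abs_cubeExpDecay_le hε (q := x) (by linarith)
  rw [secondDiff]
  refine (abs_sub _ _).trans ?_
  rw [abs_mul, abs_two]
  linarith [abs_add_le (cubeExpDecay ε (x + y)) (cubeExpDecay ε (x - y))]

-- For `x y = 0` the division returns `0`, which is also the limit of the quotient as `y → 0`.
def secondDiffQuot (ε x y : ℝ) : ℝ := secondDiff (cubeExpDecay ε) x y / (x * y)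

lemma abs_secondDiffQuot_le (hε : 0 < ε) {x y : ℝ} (hy : 0 ≤ y) (hyx : y ≤ x) :
    |secondDiffQuot ε x y| ≤ 216 * ε := by
  refine abs_div_mul_le (hy.trans hyx) hy (by positivity) ?_
  have hM : ∀ q ∈ Icc (x - y) (x + y), |cubeExpDecayDeriv2 ε q| ≤ 108 * ε := by
    rintro q ⟨hq, -⟩
    exact (abs_cubeExpDecayDeriv2_le_expDecay hε (by linarith)).trans
      (mul_le_of_le_one_right (by positivity) (expDecay_le_one (by positivity) (by linarith)))
  have := abs_secondDiff_le hasDerivAt_cubeExpDecay (hasDerivAt_cubeExpDecayDeriv hε.ne') hy hM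
  have hyy : y ^ 2 ≤ x * y := by nlinarith
  nlinarith [mul_le_mul_of_nonneg_left hyy hε.le]

lemma abs_secondDiffQuot_le_local (hε : 0 < ε) {x y : ℝ} (hy : 0 ≤ y) (hyx : y ≤ x) :
    |secondDiffQuot ε x y| ≤ 2 * y * (12 + 24 * x / ε + 8 * x ^ 2 / ε ^ 2) := by
  have hx : 0 ≤ x := hy.trans hyx
  refine abs_div_mul_le hx hy (by positivity) ?_
  have hM : ∀ q ∈ Icc (x - y) (x + y),
      |cubeExpDecayDeriv2 ε q| ≤ x * (12 + 24 * x / ε + 8 * x ^ 2 / ε ^ 2) := by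
    rintro q ⟨hq0, hq2⟩
    have hq0 : 0 ≤ q := by linarith
    have hq2 : q ≤ 2 * x := by linarith
    calc |cubeExpDecayDeriv2 ε q|
        ≤ (6 * q + 6 * q ^ 2 / ε + q ^ 3 / ε ^ 2) * expDecay ε q := abs_cubeExpDecayDeriv2_le hε hq0
      _ ≤ (6 * q + 6 * q ^ 2 / ε + q ^ 3 / ε ^ 2) * 1 := by
          gcongr; exact expDecay_le_one hε hq0
      _ ≤ 6 * (2 * x) + 6 * (2 * x) ^ 2 / ε + (2 * x) ^ 3 / ε ^ 2 := by rw [mul_one]; gcongr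
      _ = x * (12 + 24 * x / ε + 8 * x ^ 2 / ε ^ 2) := by ring
  have := abs_secondDiff_le hasDerivAt_cubeExpDecay (hasDerivAt_cubeExpDecayDeriv hε.ne') hy hM
  calc |secondDiff (cubeExpDecay ε) x y|
      ≤ 2 * (x * (12 + 24 * x / ε + 8 * x ^ 2 / ε ^ 2)) * y ^ 2 := this
    _ = 2 * y * (12 + 24 * x / ε + 8 * x ^ 2 / ε ^ 2) * (x * y) := by ring

lemma abs_secondDiffQuot_le_tail (hε : 0 < ε) {x y : ℝ} (hy : 0 ≤ y) (hyx : y ≤ x) :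
    |secondDiffQuot ε x y| ≤ 108 * ε * expDecay (4 * ε) x + 48 * ε ^ 3 / x ^ 2 := by
  have hx : 0 ≤ x := hy.trans hyx
  have hexp : 0 ≤ 108 * ε * expDecay (4 * ε) x := by have := expDecay_pos (ε := 4 * ε) x; positivity
  rcases hy.eq_or_lt with rfl | hy0
  · simp only [secondDiffQuot, mul_zero, div_zero, abs_zero]; positivity
  have hx0 : 0 < x := hy0.trans_le hyx
  -- For `y ≤ x/2`, `F''` is only evaluated on `[x/2, 3x/2]`, where it is exponentially small.
  rcases le_or_gt y (x / 2) with hsmall | hlarge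
  · have hM : ∀ q ∈ Icc (x - y) (x + y),
        |cubeExpDecayDeriv2 ε q| ≤ 108 * ε * expDecay (4 * ε) x := by
      rintro q ⟨hq, -⟩
      calc |cubeExpDecayDeriv2 ε q| ≤ 108 * ε * expDecay (2 * ε) q :=
            abs_cubeExpDecayDeriv2_le_expDecay hε (by linarith)
        _ ≤ 108 * ε * expDecay (2 * ε) (x / 2) := by
            gcongr; exact expDecay_antitone (by positivity) (by linarith)
        _ = 108 * ε * expDecay (4 * ε) x := by rw [expDecay, expDecay]; ring_nf
    have := abs_secondDiff_le hasDerivAt_cubeExpDecay (hasDerivAt_cubeExpDecayDeriv hε.ne') hy hM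
    have hquot : |secondDiffQuot ε x y| ≤ 108 * ε * expDecay (4 * ε) x :=
      abs_div_mul_le hx hy hexp (by
        have hyy : 2 * y ^ 2 ≤ x * y := by nlinarith
        nlinarith [mul_le_mul_of_nonneg_left hyy hexp])
    have : 0 ≤ 48 * ε ^ 3 / x ^ 2 := by positivity
    linarith
  · have hS := abs_secondDiff_cubeExpDecay_le hε hy hyx
    have hquot : |secondDiffQuot ε x y| ≤ 48 * ε ^ 3 / x ^ 2 := by
      refine abs_div_mul_le hx hy (by positivity) (hS.trans ?_)
      rw [div_mul_eq_mul_div, le_div_iff₀ (by positivity)]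
      have hxx : x ^ 2 ≤ 2 * (x * y) := by nlinarith
      nlinarith [mul_le_mul_of_nonneg_left hxx (by positivity : (0:ℝ) ≤ ε ^ 3)]
    linarith

def offDiagCore (ε x y : ℝ) : ℝ := secondDiffQuot ε x y - 2 * y * expDecay ε x

def tailBound (ε x : ℝ) : ℝ :=
  108 * ε * expDecay (4 * ε) x + 48 * ε ^ 3 / x ^ 2 + 2 * (x * expDecay ε x)

lemma offDiagCore_le (hε : 0 < ε) {x y : ℝ} (hy : 0 ≤ y) (hyx : y ≤ x) :
    offDiagCore ε x y ≤ 216 * ε := by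
  have := (le_abs_self _).trans (abs_secondDiffQuot_le hε hy hyx)
  have : 0 ≤ 2 * y * expDecay ε x := by have := expDecay_pos (ε := ε) x; positivity
  rw [offDiagCore]; linarith

lemma abs_offDiagCore_le_tailBound (hε : 0 < ε) {x y : ℝ} (hy : 0 ≤ y) (hyx : y ≤ x) :
    |offDiagCore ε x y| ≤ tailBound ε x := by
  have hphi : |2 * y * expDecay ε x| ≤ 2 * (x * expDecay ε x) := by
    rw [abs_of_nonneg (by have := expDecay_pos (ε := ε) x; positivity)]
    nlinarith [expDecay_pos (ε := ε) x]
  have := abs_sub (secondDiffQuot ε x y) (2 * y * expDecay ε x)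
  have := abs_secondDiffQuot_le_tail hε hy hyx
  rw [offDiagCore, tailBound]; linarith

lemma tendsto_tailBound (hε : 0 < ε) : Tendsto (tailBound ε) atTop (𝓝 0) := by
  have h1 := (tendsto_pow_mul_expDecay (ε := 4 * ε) (by positivity) 0).const_mul (108 * ε)
  have h2 := ((tendsto_pow_atTop (α := ℝ) two_ne_zero).inv_tendsto_atTop).const_mul (48 * ε ^ 3)
  have h3 := (tendsto_pow_mul_expDecay hε 1).const_mul 2
  unfold tailBound
  simpa [div_eq_mul_inv] using (h1.add h2).add h3

lemma abs_offDiagCore_le_local (hε : 0 < ε) {x y : ℝ} (hy : 0 ≤ y) (hyx : y ≤ x) :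
    |offDiagCore ε x y| ≤ 2 * y * (13 + 24 * x / ε + 8 * x ^ 2 / ε ^ 2) := by
  have hphi : |2 * y * expDecay ε x| ≤ 2 * y := by
    rw [abs_of_nonneg (by have := expDecay_pos (ε := ε) x; positivity)]
    nlinarith [expDecay_le_one hε (hy.trans hyx)]
  have := abs_sub (secondDiffQuot ε x y) (2 * y * expDecay ε x)
  have := abs_secondDiffQuot_le_local hε hy hyx
  rw [offDiagCore]; nlinarith

lemma continuousOn_offDiagCore (hε : 0 < ε) :
    ContinuousOn (Function.uncurry (offDiagCore ε)) {p | 0 ≤ p.2 ∧ p.2 ≤ p.1} := by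
  rintro ⟨x, y⟩ ⟨hy, hyx⟩
  rcases hy.eq_or_lt with rfl | hy0
  · have hbound : Continuous fun q : ℝ × ℝ =>
        2 * q.2 * (13 + 24 * q.1 / ε + 8 * q.1 ^ 2 / ε ^ 2) := by
      fun_prop
    have hlim := (hbound.tendsto (x, 0)).mono_left
      (nhdsWithin_le_nhds (s := {p : ℝ × ℝ | 0 ≤ p.2 ∧ p.2 ≤ p.1}))
    simp only [mul_zero, zero_mul] at hlim
    have hle : ∀ q ∈ {p : ℝ × ℝ | 0 ≤ p.2 ∧ p.2 ≤ p.1}, ‖Function.uncurry (offDiagCore ε) q‖ ≤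
        2 * q.2 * (13 + 24 * q.1 / ε + 8 * q.1 ^ 2 / ε ^ 2) := fun q hq =>
      abs_offDiagCore_le_local hε hq.1 hq.2
    simpa [ContinuousWithinAt, offDiagCore, secondDiffQuot] using
      squeeze_zero_norm' (eventually_nhdsWithin_of_forall hle) hlim
  · have hx0 : 0 < x := hy0.trans_le hyx
    refine ContinuousAt.continuousWithinAt ?_
    unfold Function.uncurry offDiagCore secondDiffQuot secondDiff cubeExpDecay
    exact ((by fun_prop : Continuous fun q : ℝ × ℝ => (q.1 + q.2) ^ 3 * expDecay ε (q.1 + q.2)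
      + (q.1 - q.2) ^ 3 * expDecay ε (q.1 - q.2) - 2 * (q.1 ^ 3 * expDecay ε q.1)).continuousAt.div
      (by fun_prop) (mul_pos hx0 hy0).ne').sub (by fun_prop)

def testFn (ε : ℝ) : ℝ≥0∞ → ℝ := extendTop (expDecay ε)

/- `H¹_{φ_ε}(p₁,p₂)/(p₁p₂) = offDiagCore ε p₁ p₂ - 4 p₂ φ_ε(p₂)`. Only the first term vanishes
as `p₁ → ∞` uniformly in `p₂ ≤ p₁`, so only it is extended by `0` at `∞`; composing with
`(a, b) ↦ (a, min a b)` extends the kernel continuously from `{b ≤ a}` to all of `[0,∞]²`. -/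
def offDiagKernel (ε : ℝ) (a b : ℝ≥0∞) : ℝ :=
  extendTop₂ (offDiagCore ε) a (min a b) - 4 * extendTop (fun y => y * expDecay ε y) (min a b)

def diagKernel (ε : ℝ) : ℝ≥0∞ → ℝ :=
  extendTop (fun x => 8 * x * (expDecay ε (2 * x) - expDecay ε x))

lemma restr_testFn {p : ℝ} (hp : 0 ≤ p) : restr (testFn ε) p = expDecay ε p :=
  extendTop_ofReal (h := expDecay ε) hp

lemma continuous_testFn (hε : 0 < ε) : Continuous (testFn ε) :=
  continuous_extendTop continuous_expDecay (by simpa using tendsto_pow_mul_expDecay hε 0)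

lemma testFn_nonneg (a : ℝ≥0∞) : 0 ≤ testFn ε a := by
  unfold testFn extendTop; split_ifs
  exacts [le_rfl, (expDecay_pos _).le]

lemma testFn_le_one (hε : 0 < ε) (a : ℝ≥0∞) : testFn ε a ≤ 1 := by
  unfold testFn extendTop; split_ifs
  exacts [zero_le_one, expDecay_le_one hε ENNReal.toReal_nonneg]

lemma testFn_zero : testFn ε 0 = 1 := by
  simp [testFn, extendTop, expDecay_zero]

lemma isH1Ext_offDiagKernel (hε : 0 < ε) : IsH1Ext (testFn ε) (offDiagKernel ε) := by
  refine ⟨?_, fun p₁ p₂ hp₂ hp₂₁ => ?_⟩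
  · have hfold : Continuous fun q : ℝ≥0∞ × ℝ≥0∞ => (q.1, min q.1 q.2) :=
      continuous_fst.prodMk (continuous_fst.min continuous_snd)
    have hcore := (continuousOn_extendTop₂ (continuousOn_offDiagCore hε) (tendsto_tailBound hε)
      fun x y hy hyx => abs_offDiagCore_le_tailBound hε hy hyx).comp_continuous hfold
      fun q => min_le_left q.1 q.2
    have hpsi := continuous_extendTop (by fun_prop : Continuous fun y => y * expDecay ε y)
      (by simpa using tendsto_pow_mul_expDecay hε 1)
    exact hcore.sub (continuous_const.mul (hpsi.comp (continuous_fst.min continuous_snd)))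
  · have hp₁ : 0 < p₁ := hp₂.trans hp₂₁
    rw [offDiagKernel, min_eq_right (ENNReal.ofReal_le_ofReal hp₂₁.le),
      extendTop₂_ofReal hp₁.le hp₂.le, extendTop_ofReal hp₂.le, H1,
      restr_testFn (by linarith), restr_testFn hp₁.le, restr_testFn hp₂.le,
      restr_testFn (by linarith)]
    simp only [offDiagCore, secondDiffQuot, secondDiff, cubeExpDecay]
    field_simp
    ring

lemma offDiagKernel_le (hε : 0 < ε) {a b : ℝ≥0∞} (hba : b < a) : offDiagKernel ε a b ≤ 216 * ε := by
  have hcore : extendTop₂ (offDiagCore ε) a b ≤ 216 * ε := by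
    unfold extendTop₂; split_ifs with ha
    · positivity
    · exact offDiagCore_le hε ENNReal.toReal_nonneg (ENNReal.toReal_mono ha hba.le)
  have hpsi : 0 ≤ extendTop (fun y => y * expDecay ε y) b := by
    unfold extendTop; split_ifs
    exacts [le_rfl, mul_nonneg ENNReal.toReal_nonneg (expDecay_pos _).le]
  rw [offDiagKernel, min_eq_right hba.le]
  linarith

lemma isH2Ext_diagKernel (hε : 0 < ε) : IsH2Ext (testFn ε) (diagKernel ε) := by
  refine ⟨continuous_extendTop (by fun_prop) ?_, fun p hp => ?_⟩
  · have h1 := tendsto_pow_mul_expDecay (ε := ε / 2) (by positivity) 1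
    have h2 := tendsto_pow_mul_expDecay hε 1
    simpa [expDecay_two_mul, mul_sub, mul_assoc] using (h1.sub h2).const_mul 8
  · rw [diagKernel, extendTop_ofReal hp.le, H2, restr_testFn (by linarith), restr_testFn hp.le,
      ← two_mul]
    field_simp
    ring

lemma diagKernel_nonpos (hε : 0 < ε) (a : ℝ≥0∞) : diagKernel ε a ≤ 0 := by
  unfold diagKernel extendTop; split_ifs
  · exact le_rfl
  · have hx : 0 ≤ a.toReal := ENNReal.toReal_nonneg
    have := expDecay_antitone hε (show a.toReal ≤ 2 * a.toReal by linarith)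
    nlinarith

lemma indicator_zero_le_testFn (a : ℝ≥0∞) : ({0} : Set ℝ≥0∞).indicator 1 a ≤ testFn ε a := by
  by_cases ha : a = 0
  · simp [ha, testFn_zero]
  · simpa [ha] using testFn_nonneg a

lemma tendsto_testFn (a : ℝ≥0∞) :
    Tendsto (fun ε => testFn ε a) (𝓝[>] 0) (𝓝 (({0} : Set ℝ≥0∞).indicator 1 a)) := by
  rcases eq_or_ne a 0 with rfl | ha0
  · simp [testFn_zero]
  rcases eq_or_ne a ∞ with rfl | hatop
  · simp [testFn, extendTop]
  have hx : 0 < a.toReal := ENNReal.toReal_pos ha0 hatop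
  have hdiv : Tendsto (fun ε => a.toReal / ε) (𝓝[>] 0) atTop := by
    simpa [div_eq_mul_inv] using tendsto_inv_nhdsGT_zero.const_mul_atTop hx
  simp only [testFn, extendTop, if_neg hatop, expDecay,
    indicator_of_notMem (show a ∉ ({0} : Set ℝ≥0∞) from ha0)]
  exact Real.tendsto_exp_neg_atTop_nhds_zero.comp hdiv

variable {μ : Measure ℝ≥0∞} [IsFiniteMeasure μ]

lemma integrable_testFn (hε : 0 < ε) : Integrable (testFn ε) μ :=
  Integrable.of_bound (continuous_testFn hε).aestronglyMeasurable 1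
    (ae_of_all _ fun a => by
      rw [Real.norm_eq_abs, abs_of_nonneg (testFn_nonneg a)]; exact testFn_le_one hε a)

lemma measureReal_singleton_zero_le_integral_testFn (hε : 0 < ε) :
    μ.real {0} ≤ ∫ a, testFn ε a ∂μ := by
  rw [← integral_indicator_one (measurableSet_singleton 0)]
  exact integral_mono ((integrable_const 1).indicator (measurableSet_singleton 0))
    (integrable_testFn hε) indicator_zero_le_testFn

lemma tendsto_integral_testFn :
    Tendsto (fun ε => ∫ a, testFn ε a ∂μ) (𝓝[>] 0) (𝓝 (μ.real {0})) := by
  rw [← integral_indicator_one (measurableSet_singleton 0)]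
  refine tendsto_integral_filter_of_dominated_convergence (fun _ => 1) ?_ ?_ (integrable_const 1)
    (ae_of_all _ tendsto_testFn)
  · filter_upwards [self_mem_nhdsWithin] with ε (hε : 0 < ε)
    exact (continuous_testFn hε).aestronglyMeasurable
  · filter_upwards [self_mem_nhdsWithin] with ε (hε : 0 < ε)
    exact ae_of_all _ fun a => by
      rw [Real.norm_eq_abs, abs_of_nonneg (testFn_nonneg a)]; exact testFn_le_one hε a

end AcousticWave

namespace IsWeakSolution

open AcousticWave

variable {ν : ℝ → Measure ℝ≥0∞} {ν₀ : Measure ℝ≥0∞}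

lemma integral_sub_integral_eq (hsol : IsWeakSolution ν ν₀) (ψ : C(ℝ≥0∞, ℝ))
    {K₁ : ℝ≥0∞ → ℝ≥0∞ → ℝ} {K₂ : ℝ≥0∞ → ℝ} (h₁ : IsH1Ext ψ K₁) (h₂ : IsH2Ext ψ K₂)
    {t : ℝ} (ht : 0 ≤ t) :
    ∫ p, ψ p ∂ν t - ∫ p, ψ p ∂ν₀ = ∫ s in 0..t, collInt (ν s) K₁ K₂ := by
  have := hsol.eqn (fun _ => ψ) (fun _ => 0) (fun s => hasDerivAt_const s ψ) continuous_const
    t ht (fun _ => K₁) (fun _ => K₂) (fun _ _ => h₁) (fun _ _ => h₂)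
  simpa [hsol.init] using this

lemma measureReal_univ_eq (hsol : IsWeakSolution ν ν₀) {t : ℝ} (ht : 0 ≤ t) :
    (ν t).real univ = ν₀.real univ := by
  have h₁ : IsH1Ext (ContinuousMap.const ℝ≥0∞ (1 : ℝ)) (fun _ _ => 0) :=
    ⟨continuous_const, fun p₁ p₂ _ _ => by simp only [H1, restr, ContinuousMap.const_apply]; ring⟩
  have h₂ : IsH2Ext (ContinuousMap.const ℝ≥0∞ (1 : ℝ)) (fun _ => 0) :=
    ⟨continuous_const, fun p _ => by simp only [H2, restr, ContinuousMap.const_apply]; ring⟩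
  have := hsol.integral_sub_integral_eq _ h₁ h₂ ht
  simp only [ContinuousMap.const_one, ContinuousMap.one_apply, integral_const, smul_eq_mul,
    mul_one, collInt, ite_self, mul_zero, add_zero,
    intervalIntegral.integral_zero] at this
  linarith

lemma integral_testFn_le (hsol : IsWeakSolution ν ν₀) {ε t : ℝ} (hε : 0 < ε) (ht : 0 ≤ t) :
    ∫ a, testFn ε a ∂ν t ≤ ∫ a, testFn ε a ∂ν₀ + 432 * ε * ν₀.real univ ^ 2 * t := by
  have hid := hsol.integral_sub_integral_eq ⟨testFn ε, continuous_testFn hε⟩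
    (isH1Ext_offDiagKernel hε) (isH2Ext_diagKernel hε) ht
  have hcoll : ∫ s in 0..t, collInt (ν s) (offDiagKernel ε) (diagKernel ε)
      ≤ 432 * ε * ν₀.real univ ^ 2 * t := by
    refine intervalIntegral_le_mul (by positivity) ht fun s hs => ?_
    have := hsol.finite s
    have := collInt_le (μ := ν s) (by positivity) (fun _ _ => offDiagKernel_le hε)
      (diagKernel_nonpos hε)
    rw [hsol.measureReal_univ_eq hs.1] at this
    linarith
  simp only [ContinuousMap.coe_mk] at hid
  linarith

end IsWeakSolution

open AcousticWave in
theorem statement11_general (ν₀ : Measure ℝ≥0∞)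
    (ν : ℝ → Measure ℝ≥0∞) (hsol : IsWeakSolution ν ν₀)
    (h0 : ν₀ {0} = 0) :
    ∀ t : ℝ, 0 ≤ t → ν t {0} = 0 := by
  intro t ht
  have := hsol.finite t
  have : IsFiniteMeasure ν₀ := hsol.init ▸ hsol.finite 0
  have hbound : Tendsto (fun ε => ∫ a, testFn ε a ∂ν₀ + 432 * ε * ν₀.real univ ^ 2 * t)
      (𝓝[>] 0) (𝓝 0) := by
    have hlin : Tendsto (fun ε : ℝ => 432 * ε * ν₀.real univ ^ 2 * t) (𝓝[>] 0) (𝓝 0) :=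
      tendsto_nhdsWithin_of_tendsto_nhds <| (by fun_prop : Continuous fun ε : ℝ =>
        432 * ε * ν₀.real univ ^ 2 * t).tendsto' 0 0 (by simp)
    simpa [measureReal_def, h0] using (tendsto_integral_testFn (μ := ν₀)).add hlin
  have hle : (ν t).real {0} ≤ 0 := ge_of_tendsto hbound <| by
    filter_upwards [self_mem_nhdsWithin] with ε (hε : 0 < ε)
    exact (measureReal_singleton_zero_le_integral_testFn hε).trans
      (hsol.integral_testFn_le hε ht)
  exact (measureReal_eq_zero_iff (μ := ν t)).1 (le_antisymm hle measureReal_nonneg)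

/-- for every weak solution with `ν₀({0}) = 0`, no energy ever concentrates
at the origin: `ν(t)({0}) = 0` for all `t ≥ 0`. -/
theorem statement11 (ν₀ : Measure ℝ≥0∞) [IsFiniteMeasure ν₀]
    (ν : ℝ → Measure ℝ≥0∞) (hsol : IsWeakSolution ν ν₀)
    (h0 : ν₀ {0} = 0) :
    ∀ t : ℝ, 0 ≤ t → ν t {0} = 0 :=
  statement11_general ν₀ ν hsol h0
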